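/- arXiv:1507.05646 — 6 statements merged into one kernel-verified Lean document; each statement's English description precedes it below -/
import Mathlib

section
/- Let X be a topological space in which every neighborhood of the diagonal in X_d × X (first factor discrete, second factor with the topology of X) belongs to the finest compatible quasi-uniformity 𝒰* on X. Then for every family (N_x)_{x∈X} with each N_x a neighborhood of x in X, there exists a family (M_x)_{x∈X} with each M_x a neighborhood of x such that for every x, the union ⋃_{y∈M_x} M_y ⊆ N_x. -/
/-- A quasi-uniformity on `X`: a filter of reflexive relations, each admitting a
composition-square refinement (no symmetry axiom). -/
structure QuasiUniformity (X : Type*) where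
  uni : Set (Set (X × X))
  univ_mem : Set.univ ∈ uni
  inter_mem : ∀ U ∈ uni, ∀ V ∈ uni, U ∩ V ∈ uni
  superset_mem : ∀ U ∈ uni, ∀ V : Set (X × X), U ⊆ V → V ∈ uni
  refl : ∀ U ∈ uni, ∀ x : X, (x, x) ∈ U
  comp : ∀ U ∈ uni, ∃ V ∈ uni, ∀ a b c : X, (a, b) ∈ V → (b, c) ∈ V → (a, c) ∈ U

/-- A quasi-uniformity is compatible with the topology of `X` if the sets
`U(x) = {y | (x,y) ∈ U}` form a neighborhood base at each `x`. -/
def QuasiUniformity.Compatible {X : Type*} [TopologicalSpace X] (q : QuasiUniformity X) : Prop :=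
  ∀ x : X, ∀ s : Set X, s ∈ nhds x ↔ ∃ U ∈ q.uni, {y | (x, y) ∈ U} ⊆ s

/-- Membership in the finest quasi-uniformity compatible with the topology of `X`. -/
def FineMember {X : Type*} [TopologicalSpace X] (U : Set (X × X)) : Prop :=
  ∃ q : QuasiUniformity X, q.Compatible ∧ U ∈ q.uni


namespace QuasiUniformity

variable {X : Type*} [TopologicalSpace X] {q : QuasiUniformity X} {U : Set (X × X)}

theorem Compatible.ball_mem_nhds (hq : q.Compatible) (hU : U ∈ q.uni) (x : X) :
    {y | (x, y) ∈ U} ∈ nhds x :=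
  (hq x _).2 ⟨U, hU, subset_rfl⟩

theorem Compatible.exists_nhds_comp_subset (hq : q.Compatible) (hU : U ∈ q.uni) :
    ∃ M : X → Set X, (∀ x, M x ∈ nhds x) ∧ ∀ x, ∀ y ∈ M x, M y ⊆ {z | (x, z) ∈ U} := by
  obtain ⟨V, hV, hVV⟩ := q.comp U hU
  exact ⟨fun x => {y | (x, y) ∈ V}, hq.ball_mem_nhds hV, fun x y hxy z hyz => hVV x y z hxy hyz⟩

end QuasiUniformity

/-- If every neighborhood of the diagonal in `X_d × X` belongs to the finest compatible
quasi-uniformity on `X`, then every neighborhood assignment admits a "square-refining"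
neighborhood assignment. -/
theorem nbhd_assignment_refinement_of_fine {X : Type*} [TopologicalSpace X]
    (h : ∀ W : Set (X × X), (∀ x : X, {y | (x, y) ∈ W} ∈ nhds x) → FineMember W) :
    ∀ N : X → Set X, (∀ x, N x ∈ nhds x) →
      ∃ M : X → Set X, (∀ x, M x ∈ nhds x) ∧ ∀ x, ∀ y ∈ M x, M y ⊆ N x := by
  intro N hN
  obtain ⟨q, hq, hW⟩ := h {p : X × X | p.2 ∈ N p.1} hN
  exact hq.exists_nhds_comp_subset hW
end

section
/- Let X be a topological space such that for every neighborhood assignment (N_x)_{x∈X} there is a neighborhood assignment (M_x)_{x∈X} with ⋃_{y∈M_x} M_y ⊆ N_x for all x. Then for every neighborhood assignment (N_x)_{x∈X} there exists a quasi-pseudometric d on X such that for each x the function y ↦ d(x,y) is upper semi-continuous and the open ball B_d(x,1) = {y : d(x,y) < 1} is contained in N_x. -/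
/-!
Applying the refinement hypothesis twice gives a triple refinement, so iterating yields
neighborhood assignments `U 0 = N, U 1, …` with `U (n+1) ∘ U (n+1) ∘ U (n+1) ⊆ U n`.
Let `ρ x y = 2 * 2⁻¹ ^ n` for the first level `n` with `y ∉ U n x`, and let `d x y` be the
infimum of the `ρ`-lengths of finite chains from `x` to `y`. Frink's halving argument (split a
chain at an edge so that both remaining pieces have at most half its length) shows that
`d x y < 2⁻¹ ^ n` forces `y ∈ U n x`; conversely `d ≤ ρ` makes `d y ·` small on `U n y`, which
together with the triangle inequality gives upper semicontinuity of `d x ·`.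
-/

open Filter Topology Finset
open scoped Pointwise

section

variable {X : Type*}

section ChainDist

variable (ρ : X → X → ℝ)

def chainSum (c : ℕ → X) (k : ℕ) : ℝ := ∑ i ∈ range k, ρ (c i) (c (i + 1))

def chainSums (x y : X) : Set ℝ := {s | ∃ k c, c 0 = x ∧ c k = y ∧ chainSum ρ c k = s}

noncomputable def chainDist (x y : X) : ℝ := sInf (chainSums ρ x y)

variable {ρ}

theorem chainSum_add (c : ℕ → X) (j k : ℕ) :
    chainSum ρ c (j + k) = chainSum ρ c j + chainSum ρ (fun i ↦ c (j + i)) k := by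
  simp only [chainSum, sum_range_add, add_assoc]

theorem chainSum_succ (c : ℕ → X) (k : ℕ) :
    chainSum ρ c (k + 1) = chainSum ρ c k + ρ (c k) (c (k + 1)) :=
  sum_range_succ _ k

theorem chainSum_nonneg (hρ : ∀ x y, 0 ≤ ρ x y) (c : ℕ → X) (k : ℕ) : 0 ≤ chainSum ρ c k :=
  sum_nonneg fun _ _ ↦ hρ _ _

theorem mem_chainSums (x y : X) : ρ x y ∈ chainSums ρ x y :=
  ⟨1, fun i ↦ if i = 0 then x else y, rfl, rfl, by simp [chainSum]⟩

theorem zero_mem_chainSums (x : X) : 0 ∈ chainSums ρ x x :=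
  ⟨0, fun _ ↦ x, rfl, rfl, by simp [chainSum]⟩

theorem add_mem_chainSums {x y z : X} {r s : ℝ} (hr : r ∈ chainSums ρ x y)
    (hs : s ∈ chainSums ρ y z) : r + s ∈ chainSums ρ x z := by
  obtain ⟨k, c, rfl, rfl, rfl⟩ := hr
  obtain ⟨l, e, he, rfl, rfl⟩ := hs
  let ce : ℕ → X := fun i ↦ if i ≤ k then c i else e (i - k)
  have hshift : (fun i ↦ ce (k + i)) = e := by
    funext i
    rcases i with _ | i
    · simp [ce, he]
    · simp [ce]
  refine ⟨k + l, ce, by simp [ce], by rw [← hshift], ?_⟩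
  rw [chainSum_add, hshift]
  congr 1
  refine sum_congr rfl fun i hi ↦ ?_
  have hi : i < k := mem_range.mp hi
  simp [ce, hi.le, Nat.succ_le_of_lt hi]

theorem bddBelow_chainSums (hρ : ∀ x y, 0 ≤ ρ x y) (x y : X) : BddBelow (chainSums ρ x y) :=
  ⟨0, by rintro _ ⟨k, c, -, -, rfl⟩; exact chainSum_nonneg hρ c k⟩

theorem chainDist_nonneg (hρ : ∀ x y, 0 ≤ ρ x y) (x y : X) : 0 ≤ chainDist ρ x y :=
  Real.sInf_nonneg <| by rintro _ ⟨k, c, -, -, rfl⟩; exact chainSum_nonneg hρ c k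

theorem chainDist_le (hρ : ∀ x y, 0 ≤ ρ x y) (x y : X) : chainDist ρ x y ≤ ρ x y :=
  csInf_le (bddBelow_chainSums hρ x y) (mem_chainSums x y)

theorem chainDist_self (hρ : ∀ x y, 0 ≤ ρ x y) (x : X) : chainDist ρ x x = 0 :=
  le_antisymm (csInf_le (bddBelow_chainSums hρ x x) (zero_mem_chainSums x))
    (chainDist_nonneg hρ x x)

theorem chainDist_triangle (hρ : ∀ x y, 0 ≤ ρ x y) (x y z : X) :
    chainDist ρ x z ≤ chainDist ρ x y + chainDist ρ y z := by
  have hne : ∀ x y, (chainSums ρ x y).Nonempty := fun x y ↦ ⟨_, mem_chainSums x y⟩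
  calc chainDist ρ x z ≤ sInf (chainSums ρ x y + chainSums ρ y z) :=
        csInf_le_csInf (bddBelow_chainSums hρ x z) ((hne x y).add (hne y z))
          (Set.add_subset_iff.mpr fun _ hr _ hs ↦ add_mem_chainSums hr hs)
    _ = chainDist ρ x y + chainDist ρ y z :=
        csInf_add (hne x y) (bddBelow_chainSums hρ x y) (hne y z) (bddBelow_chainSums hρ y z)

end ChainDist

def TripleRefines (V U : X → Set X) : Prop :=
  ∀ x, ∀ y ∈ V x, ∀ z ∈ V y, ∀ w ∈ V z, w ∈ U x

theorem TripleRefines.subset {V U : X → Set X} (h : TripleRefines V U) (hV : ∀ x, x ∈ V x)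
    (x : X) : V x ⊆ U x :=
  fun y hy ↦ h x y hy y (hV y) y (hV y)

section FrinkLemma

variable {ρ : X → X → ℝ} {U : ℕ → X → Set X}

theorem mem_of_chainSum_lt (hρ : ∀ x y, 0 ≤ ρ x y) (hU_self : ∀ n x, x ∈ U n x)
    (hU : ∀ n, TripleRefines (U (n + 1)) (U n))
    (hρU : ∀ n x y, ρ x y < 2⁻¹ ^ n → y ∈ U (n + 1) x) (k n : ℕ) (c : ℕ → X)
    (hc : chainSum ρ c k < 2⁻¹ ^ n) : c k ∈ U n (c 0) := by
  induction k using Nat.strong_induction_on generalizing n c with | _ k ih =>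
  rcases k with _ | m
  · exact hU_self n (c 0)
  set S := chainSum ρ c (m + 1)
  have hS : 0 ≤ S := chainSum_nonneg hρ c _
  have hhalf : S / 2 < 2⁻¹ ^ (n + 1) := by rw [pow_succ]; linarith
  -- split the chain at the last `j ≤ m` whose prefix is at most half of the total
  set j := Nat.findGreatest (fun j ↦ chainSum ρ c j ≤ S / 2) m
  have hjm : j ≤ m := Nat.findGreatest_le m
  have hprefix : chainSum ρ c j ≤ S / 2 := by
    refine Nat.findGreatest_spec (P := fun j ↦ chainSum ρ c j ≤ S / 2) (Nat.zero_le m) ?_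
    simpa [chainSum] using div_nonneg hS zero_le_two
  have hsplit : S = chainSum ρ c j + ρ (c j) (c (j + 1))
      + chainSum ρ (fun i ↦ c (j + 1 + i)) (m - j) := by
    rw [← chainSum_succ, ← chainSum_add, show j + 1 + (m - j) = m + 1 by omega]
  have hsuffix : chainSum ρ (fun i ↦ c (j + 1 + i)) (m - j) ≤ S / 2 := by
    rcases hjm.eq_or_lt with hjm | hjm
    · simpa [hjm, chainSum] using div_nonneg hS zero_le_two
    · have := Nat.findGreatest_is_greatest (Nat.lt_succ_self j) hjm
      rw [chainSum_succ] at this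
      linarith
  have hedge : ρ (c j) (c (j + 1)) ≤ S := by
    linarith [chainSum_nonneg hρ c j, chainSum_nonneg hρ (fun i ↦ c (j + 1 + i)) (m - j)]
  have h₁ : c j ∈ U (n + 1) (c 0) := ih j (by omega) (n + 1) c (by linarith)
  have h₂ : c (j + 1) ∈ U (n + 1) (c j) := hρU n _ _ (by linarith)
  have h₃ : c (m + 1) ∈ U (n + 1) (c (j + 1)) := by
    simpa [show j + 1 + (m - j) = m + 1 by omega] using
      ih (m - j) (by omega) (n + 1) (fun i ↦ c (j + 1 + i)) (by linarith)
  exact hU n _ _ h₁ _ h₂ _ h₃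

theorem mem_of_chainDist_lt (hρ : ∀ x y, 0 ≤ ρ x y) (hU_self : ∀ n x, x ∈ U n x)
    (hU : ∀ n, TripleRefines (U (n + 1)) (U n))
    (hρU : ∀ n x y, ρ x y < 2⁻¹ ^ n → y ∈ U (n + 1) x) {n : ℕ} {x y : X}
    (h : chainDist ρ x y < 2⁻¹ ^ n) : y ∈ U n x := by
  obtain ⟨_, ⟨k, c, rfl, rfl, rfl⟩, hlt⟩ := exists_lt_of_csInf_lt ⟨_, mem_chainSums x y⟩ h
  exact mem_of_chainSum_lt hρ hU_self hU hρU k n c hlt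

end FrinkLemma

/-- For antitone `U` this is `2 * 2⁻¹ ^ n` with `n` the least index such that `y ∉ U n x`,
and `0` (the supremum of `∅`) if there is no such `n`. -/
noncomputable def preDist (U : ℕ → X → Set X) (x y : X) : ℝ :=
  sSup ((fun n : ℕ ↦ 2 * (2⁻¹ : ℝ) ^ n) '' {n | y ∉ U n x})

section PreDist

variable {U : ℕ → X → Set X}

theorem preDist_nonneg (x y : X) : 0 ≤ preDist U x y :=
  Real.sSup_nonneg <| by rintro _ ⟨n, -, rfl⟩; positivity

theorem preDist_le_of_mem (hU : Antitone U) {n : ℕ} {x y : X} (h : y ∈ U n x) :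
    preDist U x y ≤ 2⁻¹ ^ n := by
  refine Real.sSup_le ?_ (by positivity)
  rintro _ ⟨m, hm, rfl⟩
  have hnm : n + 1 ≤ m := by
    by_contra! hmn
    exact hm (hU (Nat.le_of_lt_succ hmn) x h)
  calc 2 * (2⁻¹ : ℝ) ^ m ≤ 2 * 2⁻¹ ^ (n + 1) := by
        linarith [pow_le_pow_of_le_one (by norm_num : (0 : ℝ) ≤ 2⁻¹) (by norm_num) hnm]
    _ = 2⁻¹ ^ n := by ring

theorem mem_of_preDist_lt {n : ℕ} {x y : X} (h : preDist U x y < 2⁻¹ ^ n) : y ∈ U (n + 1) x := by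
  by_contra hy
  have hbdd : BddAbove ((fun n : ℕ ↦ 2 * (2⁻¹ : ℝ) ^ n) '' {n | y ∉ U n x}) :=
    ⟨2, by
      rintro _ ⟨m, -, rfl⟩
      linarith [pow_le_one₀ (n := m) (by norm_num : (0 : ℝ) ≤ 2⁻¹) (by norm_num)]⟩
  have : 2 * (2⁻¹ : ℝ) ^ (n + 1) ≤ preDist U x y := le_csSup hbdd ⟨n + 1, hy, rfl⟩
  rw [pow_succ] at this
  linarith

theorem eventually_preDist_lt [TopologicalSpace X] (hU_nhds : ∀ n x, U n x ∈ 𝓝 x)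
    (hU : Antitone U) (y : X) {ε : ℝ} (hε : 0 < ε) : ∀ᶠ z in 𝓝 y, preDist U y z < ε := by
  obtain ⟨n, hn⟩ := exists_pow_lt_of_lt_one hε (by norm_num : (2⁻¹ : ℝ) < 1)
  filter_upwards [hU_nhds n y] with z hz
  exact (preDist_le_of_mem hU hz).trans_lt hn

end PreDist

theorem upperSemicontinuous_of_triangle [TopologicalSpace X] {d : X → X → ℝ}
    (htri : ∀ x y z, d x z ≤ d x y + d y z) (hd : ∀ y, ∀ ε > 0, ∀ᶠ z in 𝓝 y, d y z < ε)
    (x : X) : UpperSemicontinuous (d x) := by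
  intro y b hb
  filter_upwards [hd y (b - d x y) (by linarith)] with z hz
  linarith [htri x y z]

theorem exists_seq_of_forall_exists {α : Type*} {P : α → Prop} {R : α → α → Prop}
    (h : ∀ a, P a → ∃ b, P b ∧ R b a) {a : α} (ha : P a) :
    ∃ f : ℕ → α, f 0 = a ∧ (∀ n, P (f n)) ∧ ∀ n, R (f (n + 1)) (f n) := by
  choose g hgP hgR using h
  let F : ℕ → {a // P a} := fun n ↦ (fun b ↦ ⟨g b.1 b.2, hgP b.1 b.2⟩)^[n] ⟨a, ha⟩
  refine ⟨fun n ↦ (F n).1, rfl, fun n ↦ (F n).2, fun n ↦ ?_⟩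
  simp only [F, Function.iterate_succ_apply']
  exact hgR _ _

theorem exists_tripleRefines [TopologicalSpace X]
    (h : ∀ N : X → Set X, (∀ x, N x ∈ 𝓝 x) →
      ∃ M : X → Set X, (∀ x, M x ∈ 𝓝 x) ∧ ∀ x, ∀ y ∈ M x, M y ⊆ N x)
    {N : X → Set X} (hN : ∀ x, N x ∈ 𝓝 x) :
    ∃ V : X → Set X, (∀ x, V x ∈ 𝓝 x) ∧ TripleRefines V N := by
  obtain ⟨M, hM, hMN⟩ := h N hN
  obtain ⟨V, hV, hVM⟩ := h M hM
  exact ⟨V, hV, fun x y hy z hz w hw ↦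
    hMN x z (hVM x y hy hz) (hVM z z (mem_of_mem_nhds (hV z)) hw)⟩

end

/-- If every neighborhood assignment on `X` admits a square-refining neighborhood
assignment, then every neighborhood assignment `N` admits a quasi-pseudometric `d` such that
each `d x ·` is upper semi-continuous and the unit ball `B_d(x,1)` is contained in `N x`. -/
theorem quasiPseudometric_of_nbhd_assignment_refinement {X : Type*} [TopologicalSpace X]
    (h : ∀ N : X → Set X, (∀ x, N x ∈ nhds x) →
      ∃ M : X → Set X, (∀ x, M x ∈ nhds x) ∧ ∀ x, ∀ y ∈ M x, M y ⊆ N x) :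
    ∀ N : X → Set X, (∀ x, N x ∈ nhds x) →
      ∃ d : X → X → ℝ, (∀ x y, 0 ≤ d x y) ∧ (∀ x, d x x = 0) ∧
        (∀ x y z, d x z ≤ d x y + d y z) ∧
        (∀ x, UpperSemicontinuous (d x)) ∧
        (∀ x, {y | d x y < 1} ⊆ N x) := by
  intro N hN
  obtain ⟨U, rfl, hU_nhds, hU⟩ :=
    exists_seq_of_forall_exists (fun _ ↦ exists_tripleRefines h) hN
  have hU_self (n : ℕ) (x : X) : x ∈ U n x := mem_of_mem_nhds (hU_nhds n x)
  have hU_anti : Antitone U := antitone_nat_of_succ_le fun n ↦ (hU n).subset (hU_self (n + 1))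
  have hρ := preDist_nonneg (U := U)
  refine ⟨chainDist (preDist U), chainDist_nonneg hρ, chainDist_self hρ, chainDist_triangle hρ,
    upperSemicontinuous_of_triangle (chainDist_triangle hρ) fun y ε hε ↦ ?_, fun x y hy ↦ ?_⟩
  · filter_upwards [eventually_preDist_lt hU_nhds hU_anti y hε] with z hz
    exact (chainDist_le hρ y z).trans_lt hz
  · exact mem_of_chainDist_lt hρ hU_self hU (fun _ _ _ ↦ mem_of_preDist_lt) (n := 0)
      (by simpa using hy)
end

section
/- Let X be a countable T1 topological space. Then every neighborhood U of the diagonal Δ₁ in X_d × X (first factor discrete) is a member of the finest quasi-uniformity on X; equivalently, every neighborhood assignment (N_x)_{x∈X} admits a neighborhood assignment (M_x)_{x∈X} with ⋃_{y∈M_x} M_y ⊆ N_x for all x ∈ X. -/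
/-! Enumerate `X` injectively by `r : X → ℕ` and build `M x` by recursion along `r`: intersect
`interior (N x)` with `M y` for every earlier `y` with `x ∈ M y`, and delete every earlier `y`
with `M y ⊄ N x`. Only finitely many points precede `x` and finite sets are closed in a
T1 space, so `M x` stays open. For `y ∈ M x`, an earlier `y` survived the deletion, so
`M y ⊆ N x`; a later `y` has `M y ⊆ M x ⊆ N x` by the intersection step at `y`. -/

open Set Topology

theorem finite_setOf_lt_of_injective {X : Type*} {r : X → ℕ} (hr : Function.Injective r)
    (x : X) : {y | r y < r x}.Finite :=
  (finite_Iio (r x)).preimage hr.injOn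

section RefiningNbhd

variable {X : Type*} [TopologicalSpace X] (r : X → ℕ) (N : X → Set X)

noncomputable def refiningNbhd (x : X) : Set X :=
  (interior (N x) ∩ ⋂ y, ⋂ (_ : r y < r x), ⋂ (_ : x ∈ refiningNbhd y), refiningNbhd y) \
    {y | ∃ _ : r y < r x, ¬ refiningNbhd y ⊆ N x}
termination_by r x

theorem refiningNbhd_subset_interior (x : X) : refiningNbhd r N x ⊆ interior (N x) := by
  rw [refiningNbhd]
  exact fun z hz => hz.1.1

theorem mem_refiningNbhd_self {x : X} (hx : N x ∈ 𝓝 x) : x ∈ refiningNbhd r N x := by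
  rw [refiningNbhd]
  refine ⟨⟨mem_interior_iff_mem_nhds.2 hx, mem_iInter₂.2 fun y _ => mem_iInter.2 id⟩, ?_⟩
  rintro ⟨h, -⟩
  exact lt_irrefl _ h

variable {r}

theorem isOpen_refiningNbhd [T1Space X] (hr : Function.Injective r) (x : X) :
    IsOpen (refiningNbhd r N x) := by
  rw [refiningNbhd]
  refine (isOpen_interior.inter ?_).sdiff ?_
  · refine (finite_setOf_lt_of_injective hr x).isOpen_biInter fun y hy => ?_
    exact isOpen_iInter_of_finite fun _ => isOpen_refiningNbhd hr y
  · exact ((finite_setOf_lt_of_injective hr x).subset fun _ hy => hy.1).isClosed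
termination_by r x

theorem refiningNbhd_subset_of_mem (hr : Function.Injective r) {x y : X}
    (hy : y ∈ refiningNbhd r N x) : refiningNbhd r N y ⊆ N x := by
  rcases lt_trichotomy (r y) (r x) with hyx | hyx | hxy
  · rw [refiningNbhd] at hy
    by_contra hsub
    exact hy.2 ⟨hyx, hsub⟩
  · rw [hr hyx]
    exact (refiningNbhd_subset_interior r N x).trans interior_subset
  · intro z hz
    rw [refiningNbhd] at hz
    have hzx : z ∈ refiningNbhd r N x := mem_iInter.1 (mem_iInter₂.1 hz.1.2 x hxy) hy
    exact interior_subset (refiningNbhd_subset_interior r N x hzx)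

end RefiningNbhd

/-- For a countable T1 space, every neighborhood assignment admits a square-refining
neighborhood assignment (equivalently, every neighborhood of the diagonal in `X_d × X`
belongs to the finest quasi-uniformity on `X`). -/
theorem countable_t1_nbhd_assignment_refinement {X : Type*} [TopologicalSpace X]
    [T1Space X] [Countable X] :
    ∀ N : X → Set X, (∀ x, N x ∈ nhds x) →
      ∃ M : X → Set X, (∀ x, M x ∈ nhds x) ∧ ∀ x, ∀ y ∈ M x, M y ⊆ N x := by
  intro N hN
  obtain ⟨r, hr⟩ := Countable.exists_injective_nat X
  refine ⟨refiningNbhd r N, fun x => ?_, fun x y hy => refiningNbhd_subset_of_mem N hr hy⟩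
  exact (isOpen_refiningNbhd N hr x).mem_nhds (mem_refiningNbhd_self r N (hN x))
end

section
/- Let X be a compact first-countable Hausdorff space. Then every neighborhood assignment (N_x)_{x∈X} admits a neighborhood assignment (M_x)_{x∈X} satisfying ⋃_{y∈M_x} M_y ⊆ N_x for all x ∈ X if and only if X is countable. -/
/-!
A countable space has normal neighbornets: enumerate it and let `M x` avoid the earlier points
and lie inside `N y` for each of the finitely many earlier `y` with `x ∈ interior (N y)`.

Conversely, normality of neighbornets passes to subspaces and to images under closed continuous
surjections. An uncountable compact first-countable Hausdorff space contains a nonempty perfect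
set (the closure of its condensation points; points are `Gδ`), hence a Cantor scheme of closed
sets, whose limit set maps continuously onto `ℕ → Bool`. The Cantor space fails the property by
the Baire category theorem: if `N z` is the cylinder of `z` cut at its last `true`, a generic
point `p` lies in `M z` for some `z` whose cylinder `N z` is arbitrarily long, which forces
`M p ⊆ {p}`.
-/

open Set Filter Topology Function PiNat

def NormalNeighbornets (X : Type*) [TopologicalSpace X] : Prop :=
  ∀ N : X → Set X, (∀ x, N x ∈ 𝓝 x) →
    ∃ M : X → Set X, (∀ x, M x ∈ 𝓝 x) ∧ ∀ x, ∀ y ∈ M x, M y ⊆ N x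

section Neighbornets

variable {X Y : Type*} [TopologicalSpace X] [TopologicalSpace Y]

namespace NormalNeighbornets

theorem of_countable [T1Space X] [Countable X] : NormalNeighbornets X := by
  intro N hN
  obtain ⟨e, he⟩ := Countable.exists_injective_nat X
  have hfin : ∀ x, {y | e y ≤ e x}.Finite := fun x => (finite_Iic (e x)).preimage he.injOn
  -- `z ∈ M x` comes no earlier than `x` and lies in `interior (N x)`,
  -- so `M z ⊆ interior (N x)`.
  refine ⟨fun x => (⋂ y ∈ {y | e y ≤ e x ∧ x ∈ interior (N y)}, interior (N y)) \
    {y | e y < e x}, fun x => sdiff_mem ?_ ?_, fun x z hz => ?_⟩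
  · rw [biInter_mem ((hfin x).subset fun y hy => hy.1)]
    exact fun y hy => isOpen_interior.mem_nhds hy.2
  · refine ((hfin x).subset fun y (hy : e y < e x) => hy.le).isClosed.compl_mem_nhds ?_
    exact lt_irrefl (e x)
  · have hxz : e x ≤ e z := not_lt.1 hz.2
    have hzx : z ∈ interior (N x) :=
      mem_iInter₂.1 hz.1 x ⟨le_rfl, mem_interior_iff_mem_nhds.2 (hN x)⟩
    exact fun w hw => interior_subset (mem_iInter₂.1 hw.1 x ⟨hxz, hzx⟩)

theorem exists_mem_nhds_subset_of_dense [BaireSpace X] [Nonempty X]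
    (hX : NormalNeighbornets X) {N : X → Set X} (hN : ∀ x, N x ∈ 𝓝 x) {D : ℕ → Set X}
    (hD : ∀ c, Dense (D c)) : ∃ p, ∃ V ∈ 𝓝 p, ∀ c, ∃ z ∈ D c, V ⊆ N z := by
  obtain ⟨M, hM, hMN⟩ := hX N hN
  have hdense : Dense (⋂ c, ⋃ z ∈ D c, interior (M z)) :=
    dense_iInter_of_isOpen_nat (fun c => isOpen_biUnion fun _ _ => isOpen_interior) fun c =>
      (hD c).mono fun z hz => mem_biUnion hz (mem_interior_iff_mem_nhds.2 (hM z))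
  obtain ⟨p, hp⟩ := hdense.nonempty
  refine ⟨p, M p, hM p, fun c => ?_⟩
  obtain ⟨z, hz, hpz⟩ := mem_iUnion₂.1 (mem_iInter.1 hp c)
  exact ⟨z, hz, hMN z p (interior_subset hpz)⟩

end NormalNeighbornets

theorem Topology.IsEmbedding.normalNeighbornets {f : Y → X} (hf : IsEmbedding f)
    (hX : NormalNeighbornets X) : NormalNeighbornets Y := by
  intro N hN
  -- at `x = f y` this is `f '' N y ∪ (range f)ᶜ`; off the range of `f` it is `univ`
  have hN' : ∀ x, {w | ∀ y y', f y = x → f y' = w → y' ∈ N y} ∈ 𝓝 x := fun x => by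
    rcases em (∃ y, f y = x) with ⟨y, rfl⟩ | hx
    · obtain ⟨t, ht, htN⟩ := (hf.nhds_eq_comap y ▸ hN y : N y ∈ comap f (𝓝 (f y)))
      filter_upwards [ht] with w hw y₁ y' hy₁ hy'
      rw [hf.injective hy₁]
      exact htN (show f y' ∈ t from hy' ▸ hw)
    · simp_all
  obtain ⟨M, hM, hMN⟩ := hX _ hN'
  exact ⟨fun y => f ⁻¹' M (f y), fun y => hf.continuous.continuousAt.preimage_mem_nhds (hM _),
    fun y y' hy' y'' hy'' => hMN _ _ hy' hy'' y y'' rfl rfl⟩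

theorem IsClosedMap.normalNeighbornets {f : X → Y} (hcl : IsClosedMap f) (hc : Continuous f)
    (hs : Surjective f) (hX : NormalNeighbornets X) : NormalNeighbornets Y := by
  intro N hN
  obtain ⟨M, hM, hMN⟩ :=
    hX (fun x => f ⁻¹' N (f x)) fun x => hc.continuousAt.preimage_mem_nhds (hN _)
  set O : Y → Set X := fun y => ⋃ x ∈ f ⁻¹' {y}, interior (M x)
  have hO : ∀ y, f ⁻¹' {y} ⊆ O y := fun y x hx =>
    mem_biUnion hx (mem_interior_iff_mem_nhds.2 (hM x))
  -- `(f '' (O y)ᶜ)ᶜ` is open since `f` is closed, and its preimage lies in `O y`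
  have hpre : ∀ y, f ⁻¹' (f '' (O y)ᶜ)ᶜ ⊆ O y := fun y x hx =>
    by_contra fun h => hx ⟨x, h, rfl⟩
  refine ⟨fun y => (f '' (O y)ᶜ)ᶜ, fun y => ?_, fun y y' hy' y'' hy'' => ?_⟩
  · refine (hcl _ (isOpen_biUnion fun _ _ => isOpen_interior).isClosed_compl).isOpen_compl
      |>.mem_nhds ?_
    rintro ⟨x, hx, rfl⟩
    exact hx (hO _ rfl)
  · obtain ⟨w, rfl⟩ := hs y''
    obtain ⟨x', rfl, hwx'⟩ := mem_iUnion₂.1 (hpre _ hy'')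
    obtain ⟨x, rfl, hx'x⟩ := mem_iUnion₂.1 (hpre _ hy')
    exact hMN x x' (interior_subset hx'x) (interior_subset hwx')

end Neighbornets

theorem PiNat.not_cylinder_subset_cylinder_succ {E : ℕ → Type*} [∀ n, Nontrivial (E n)]
    (x : ∀ n, E n) (n : ℕ) : ¬ cylinder x n ⊆ cylinder x (n + 1) := fun h => by
  obtain ⟨a, ha⟩ := exists_ne (x n)
  simpa [ha] using mem_cylinder_iff.1 (h (update_mem_cylinder x n a)) n (lt_add_one n)

-- `sSup` is `0` on sequences with infinitely many `true`s
theorem PiNat.dense_setOf_le_sSup_true (c : ℕ) :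
    Dense {z : ℕ → Bool | c ≤ sSup {i | z i = true}} := by
  refine (isTopologicalBasis_cylinders fun _ => Bool).dense_iff.2 ?_
  rintro _ ⟨x, n, rfl⟩ -
  set z : ℕ → Bool := fun i => if i < n then x i else decide (i = max n c)
  have hbdd : BddAbove {i | z i = true} := ⟨max n c, fun i hi => by
    by_cases h : i < n
    · exact h.le.trans (le_max_left n c)
    · exact (show i = max n c by simpa [z, h] using hi).le⟩
  refine ⟨z, fun i hi => if_pos hi, (le_max_right n c).trans (le_csSup hbdd ?_)⟩
  simp [z]

theorem not_normalNeighbornets_nat_bool : ¬ NormalNeighbornets (ℕ → Bool) := fun h => by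
  obtain ⟨p, V, hV, hVN⟩ := h.exists_mem_nhds_subset_of_dense
    (fun z => (isOpen_cylinder _ z _).mem_nhds (self_mem_cylinder z (sSup {i | z i = true})))
    PiNat.dense_setOf_le_sSup_true
  obtain ⟨_, ⟨x, n, rfl⟩, hpx, hxV⟩ :=
    (isTopologicalBasis_cylinders fun _ => Bool).mem_nhds_iff.1 hV
  rw [← mem_cylinder_iff_eq.1 hpx] at hxV
  obtain ⟨z, hz, hVz⟩ := hVN (n + 1)
  rw [← mem_cylinder_iff_eq.1 (hVz (mem_of_mem_nhds hV))] at hVz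
  exact not_cylinder_subset_cylinder_succ p n ((hxV.trans hVz).trans (cylinder_anti p hz))

section Condensation

variable {X : Type*} [TopologicalSpace X]

def condensationPoints (X : Type*) [TopologicalSpace X] : Set X :=
  {x | ∀ U ∈ 𝓝 x, ¬ U.Countable}

theorem IsLindelof.countable_of_disjoint_condensationPoints {s : Set X} (hs : IsLindelof s)
    (h : Disjoint s (condensationPoints X)) : s.Countable := by
  have : ∀ x ∈ s, ∃ U ∈ 𝓝 x, U.Countable := fun x hx => by
    simpa [condensationPoints] using h.notMem_of_mem_left hx
  choose! U hU hUc using this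
  obtain ⟨t, htc, hts, hst⟩ := hs.elim_nhds_subcover U hU
  exact (htc.biUnion fun x hx => hUc x (hts x hx)).mono hst

theorem condensationPoints_nonempty [LindelofSpace X] (h : ¬ Countable X) :
    (condensationPoints X).Nonempty := by
  by_contra hne
  refine h (countable_univ_iff.1 (isLindelof_univ.countable_of_disjoint_condensationPoints ?_))
  simp [not_nonempty_iff_eq_empty.1 hne]

theorem preperfect_condensationPoints [LindelofSpace X] [RegularSpace X] [T1Space X]
    [FirstCountableTopology X] : Preperfect (condensationPoints X) := by
  rw [preperfect_iff_nhds]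
  intro x hx U hU
  by_contra! hUx
  obtain ⟨C, hC, hCcl, hCU⟩ := exists_mem_nhds_isClosed_subset hU
  obtain ⟨V, hVo, hxV⟩ := isGδ_iff_eq_iInter_nat.1 (IsGδ.singleton x)
  have hdiff : IsLindelof (C \ {x}) := by
    rw [hxV, sdiff_iInter]
    exact isLindelof_iUnion fun n => (hCcl.sdiff (hVo n)).isLindelof
  have hcount := hdiff.countable_of_disjoint_condensationPoints
    (disjoint_left.2 fun y hy hyD => hy.2 (hUx y ⟨hCU hy.1, hyD⟩))
  exact hx C hC ((hcount.union (countable_singleton x)).mono (by simp))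

theorem exists_perfect_nonempty_of_not_countable [LindelofSpace X] [RegularSpace X] [T1Space X]
    [FirstCountableTopology X] (h : ¬ Countable X) : ∃ C : Set X, Perfect C ∧ C.Nonempty :=
  ⟨_, preperfect_condensationPoints.perfect_closure, (condensationPoints_nonempty h).closure⟩

end Condensation

section Scheme

variable {X : Type*}

theorem Perfect.exists_cantorScheme [TopologicalSpace X] [T25Space X] {C : Set X}
    (hC : Perfect C) (hne : C.Nonempty) :
    ∃ A : List Bool → Set X, (∀ s, IsClosed (A s) ∧ (A s).Nonempty) ∧
      CantorScheme.Antitone A ∧ CantorScheme.Disjoint A := by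
  have hsplit : ∀ D : {D : Set X // Perfect D ∧ D.Nonempty},
      ∃ E : Bool → {D : Set X // Perfect D ∧ D.Nonempty},
        (∀ b, (E b).1 ⊆ D.1) ∧ Disjoint (E true).1 (E false).1 := fun D => by
    obtain ⟨C₀, C₁, ⟨h₀, hne₀, hsub₀⟩, ⟨h₁, hne₁, hsub₁⟩, hdisj⟩ :=
      D.2.1.splitting D.2.2
    exact ⟨fun b => if b then ⟨C₀, h₀, hne₀⟩ else ⟨C₁, h₁, hne₁⟩,
      fun b => by cases b <;> assumption, hdisj⟩
  choose E hEsub hEdisj using hsplit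
  let F : List Bool → {D : Set X // Perfect D ∧ D.Nonempty} :=
    List.foldr (fun b D => E D b) ⟨C, hC, hne⟩
  refine ⟨fun s => (F s).1, fun s => ⟨(F s).2.1.closed, (F s).2.2⟩,
    fun s b => hEsub (F s) b, ?_⟩
  rintro s (_ | _) (_ | _) hne
  · exact absurd rfl hne
  · exact (hEdisj _).symm
  · exact hEdisj _
  · exact absurd rfl hne

namespace CantorScheme

variable {A : List Bool → Set X}

theorem disjoint_of_length_eq (hanti : CantorScheme.Antitone A)
    (hdisj : CantorScheme.Disjoint A) :
    ∀ {s t : List Bool}, s.length = t.length → s ≠ t → Disjoint (A s) (A t)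
  | [], [], _, hne => absurd rfl hne
  | a :: s, b :: t, hlen, hne => by
    by_cases hst : s = t
    · subst hst
      exact hdisj s fun hab => hne (hab ▸ rfl)
    · exact (disjoint_of_length_eq hanti hdisj (Nat.succ_injective hlen) hst).mono
        (hanti s a) (hanti t b)

variable (A) in
def levelUnion (b : Bool) (n : ℕ) : Set X :=
  ⋃ s ∈ {s : List Bool | s.length = n}, A (b :: s)

variable (A) in
def limitSet : Set X := ⋂ n, (levelUnion A true n ∪ levelUnion A false n)

variable (A) in
noncomputable def code (x : X) (n : ℕ) : Bool := (levelUnion A true n).boolIndicator x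

theorem disjoint_levelUnion (hanti : CantorScheme.Antitone A) (hdisj : CantorScheme.Disjoint A)
    (n : ℕ) : Disjoint (levelUnion A true n) (levelUnion A false n) := by
  simp only [levelUnion, disjoint_iUnion_left, disjoint_iUnion_right]
  intro s hs t ht
  exact disjoint_of_length_eq hanti hdisj (by simp_all) (by simp)

theorem mem_limitSet_and_code_eq (hanti : CantorScheme.Antitone A)
    (hdisj : CantorScheme.Disjoint A) {z : ℕ → Bool} {x : X} (hx : x ∈ ⋂ n, A (res z n)) :
    x ∈ limitSet A ∧ code A x = z := by
  have hmem : ∀ n, x ∈ levelUnion A (z n) n := fun n =>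
    mem_biUnion (res_length z n) (res_succ z n ▸ mem_iInter.1 hx (n + 1))
  refine ⟨mem_iInter.2 fun n => ?_, funext fun n => ?_⟩
  · cases hzn : z n
    · exact Or.inr (hzn ▸ hmem n)
    · exact Or.inl (hzn ▸ hmem n)
  · cases hzn : z n
    · exact (notMem_iff_boolIndicator _ x).1
        ((disjoint_levelUnion hanti hdisj n).notMem_of_mem_right (hzn ▸ hmem n))
    · exact (mem_iff_boolIndicator _ x).1 (hzn ▸ hmem n)

variable [TopologicalSpace X]

theorem nonempty_iInter_res [CompactSpace X] (hA : ∀ s, IsClosed (A s) ∧ (A s).Nonempty)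
    (hanti : CantorScheme.Antitone A) (z : ℕ → Bool) : (⋂ n, A (res z n)).Nonempty :=
  IsCompact.nonempty_iInter_of_sequence_nonempty_isCompact_isClosed _
    (fun n => res_succ z n ▸ hanti _ _) (fun _ => (hA _).2) (hA _).1.isCompact (fun _ => (hA _).1)

theorem isClosed_levelUnion (hA : ∀ s, IsClosed (A s)) (b : Bool) (n : ℕ) :
    IsClosed (levelUnion A b n) :=
  (List.finite_length_eq Bool n).isClosed_biUnion fun _ _ => hA _

theorem isClosed_limitSet (hA : ∀ s, IsClosed (A s)) : IsClosed (limitSet A) :=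
  isClosed_iInter fun n => (isClosed_levelUnion hA true n).union (isClosed_levelUnion hA false n)

theorem continuousOn_code (hA : ∀ s, IsClosed (A s)) (hanti : CantorScheme.Antitone A)
    (hdisj : CantorScheme.Disjoint A) : ContinuousOn (code A) (limitSet A) := by
  refine continuousOn_pi.2 fun n => (continuousOn_boolIndicator_iff_isClopen _ _).2
    ⟨(isClosed_levelUnion hA true n).preimage continuous_subtype_val, ?_⟩
  have hcompl : ((↑) : limitSet A → X) ⁻¹' (levelUnion A true n)ᶜ =
      (↑) ⁻¹' levelUnion A false n := by
    ext ⟨x, hx⟩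
    have hcover := mem_iInter.1 hx n
    have hdisj' := (disjoint_levelUnion hanti hdisj n).notMem_of_mem_left (a := x)
    exact ⟨hcover.resolve_left, fun hF hT => hdisj' hT hF⟩
  rw [← isClosed_compl_iff, ← preimage_compl, hcompl]
  exact (isClosed_levelUnion hA false n).preimage continuous_subtype_val

theorem surjOn_code [CompactSpace X] (hA : ∀ s, IsClosed (A s) ∧ (A s).Nonempty)
    (hanti : CantorScheme.Antitone A) (hdisj : CantorScheme.Disjoint A) :
    SurjOn (code A) (limitSet A) univ := fun z _ =>
  have ⟨x, hx⟩ := nonempty_iInter_res hA hanti z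
  ⟨x, mem_limitSet_and_code_eq hanti hdisj hx⟩

end CantorScheme

end Scheme

/-- For a compact first-countable Hausdorff space `X`, every neighborhood assignment admits a
square-refining neighborhood assignment iff `X` is countable. -/
theorem compact_firstCountable_refinement_iff_countable {X : Type*} [TopologicalSpace X]
    [CompactSpace X] [T2Space X] [FirstCountableTopology X] :
    (∀ N : X → Set X, (∀ x, N x ∈ nhds x) →
      ∃ M : X → Set X, (∀ x, M x ∈ nhds x) ∧ ∀ x, ∀ y ∈ M x, M y ⊆ N x) ↔
      Countable X := by
  refine ⟨fun hX => ?_, fun _ => NormalNeighbornets.of_countable⟩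
  by_contra hcount
  obtain ⟨C, hC, hCne⟩ := exists_perfect_nonempty_of_not_countable hcount
  obtain ⟨A, hA, hanti, hdisj⟩ := hC.exists_cantorScheme hCne
  have hKcl := CantorScheme.isClosed_limitSet fun s => (hA s).1
  have : CompactSpace (CantorScheme.limitSet A) := isCompact_iff_compactSpace.1 hKcl.isCompact
  set f := (CantorScheme.limitSet A).domRestrict (CantorScheme.code A)
  have hf : Continuous f :=
    (CantorScheme.continuousOn_code (fun s => (hA s).1) hanti hdisj).domRestrict
  have hfs : Surjective f := fun z =>
    have ⟨x, hx, hxz⟩ := CantorScheme.surjOn_code hA hanti hdisj (mem_univ z)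
    ⟨⟨x, hx⟩, hxz⟩
  exact not_normalNeighbornets_nat_bool <| hf.isClosedMap.normalNeighbornets hf hfs <|
    IsEmbedding.subtypeVal.normalNeighbornets hX
end

section
/- Let f : X → Y be a closed continuous surjection between topological spaces. If X is a Fréchet–Urysohn space, then Y is a Fréchet–Urysohn space. -/
open Set

theorem Continuous.image_seqClosure_subset {X Y : Type*} [TopologicalSpace X]
    [TopologicalSpace Y] {f : X → Y} (hf : Continuous f) (s : Set X) :
    f '' seqClosure s ⊆ seqClosure (f '' s) := by
  rintro _ ⟨x, ⟨u, hu, hux⟩, rfl⟩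
  exact ⟨f ∘ u, fun n => mem_image_of_mem f (hu n), (hf.tendsto x).comp hux⟩

/-- A closed continuous surjective image of a Fréchet–Urysohn space is Fréchet–Urysohn. -/
theorem frechetUrysohn_of_closedMap {X Y : Type*} [TopologicalSpace X] [TopologicalSpace Y]
    [FrechetUrysohnSpace X] (f : X → Y) (hc : Continuous f) (hcl : IsClosedMap f)
    (hs : Function.Surjective f) : FrechetUrysohnSpace Y := by
  refine ⟨fun A => ?_⟩
  calc closure A = closure (f '' (f ⁻¹' A)) := by rw [image_preimage_eq A hs]
    _ = f '' seqClosure (f ⁻¹' A) := by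
      rw [hcl.closure_image_eq_of_continuous hc, seqClosure_eq_closure]
    _ ⊆ seqClosure (f '' (f ⁻¹' A)) := hc.image_seqClosure_subset _
    _ = seqClosure A := by rw [image_preimage_eq A hs]
end

section
/- Let X be a T1-space and let F be the free group on the underlying set of X. Define i_n : (X ⊕ X⁻¹ ⊕ {e})^n → F by multiplication of coordinates. For n ≥ 3, let A = {(x, x, x⁻¹, e, …, e) : x ∈ X \ {x₀}} for a fixed non-isolated point x₀ ∈ X. Then A is a closed discrete subset of (X ⊕ (X⁻¹ with discrete topology) ⊕ {e})^n, while i_n(A) = X \ {x₀} is not closed in X (its closure contains x₀). -/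
/-!
The inverse letters form a clopen discrete part of `X ⊕ X⁻¹ ⊕ {e}`, so reading off the
third coordinate of a word as an inverse letter (or nothing) is a continuous map from
`(X ⊕ X⁻¹ ⊕ {e})ⁿ` to a discrete space, and it is injective on `A`. In a T1 space such a set
is closed and discrete: each fibre is open and meets it in at most one point. Multiplying out,
`x · x · x⁻¹ = x`, so `i_n` maps `A` onto `X \ {x₀}`, which is not closed as `x₀` is not isolated.
-/

/-- The letter space `X ⊕ X⁻¹ ⊕ {e}`, with `X` in its given topology, the copy of inverses
discrete, and the extra identity point. -/
def letterTop (X : Type*) (t : TopologicalSpace X) : TopologicalSpace (X ⊕ X ⊕ Unit) :=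
  @instTopologicalSpaceSum X (X ⊕ Unit) t (@instTopologicalSpaceSum X Unit ⊥ ⊥)

/-- Interpretation of a letter in the free group on `X`: `x ↦ x`, an inverse letter
`x⁻¹ ↦ (x)⁻¹`, and `e ↦ 1`. -/
def letterVal {X : Type*} : X ⊕ X ⊕ Unit → FreeGroup X :=
  Sum.elim FreeGroup.of (Sum.elim (fun x => (FreeGroup.of x)⁻¹) (fun _ => 1))

/-- The multiplication map `i_n : (X ⊕ X⁻¹ ⊕ {e})ⁿ → F(X)`. -/
def iMap {X : Type*} (n : ℕ) (v : Fin n → X ⊕ X ⊕ Unit) : FreeGroup X :=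
  (List.ofFn fun j => letterVal (v j)).prod

open Set

instance Sum.t1Space {X Y : Type*} [TopologicalSpace X] [TopologicalSpace Y] [T1Space X]
    [T1Space Y] : T1Space (X ⊕ Y) where
  t1 := by
    rintro (x | y)
    · simpa using Topology.IsClosedEmbedding.inl.isClosedMap _ (isClosed_singleton (x := x))
    · simpa using Topology.IsClosedEmbedding.inr.isClosedMap _ (isClosed_singleton (x := y))

theorem isClosed_and_isolated_of_injOn {Y Z : Type*} [TopologicalSpace Y] [T1Space Y]
    [TopologicalSpace Z] [DiscreteTopology Z] {π : Y → Z} (hπ : Continuous π) {A : Set Y}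
    (hA : InjOn π A) :
    IsClosed A ∧ ∀ a ∈ A, ∃ U : Set Y, IsOpen U ∧ U ∩ A = {a} := by
  have hfiber (z : Z) : (A ∩ π ⁻¹' {z}).Subsingleton := fun a ha b hb =>
    hA ha.1 hb.1 (ha.2.trans hb.2.symm)
  refine ⟨?_, fun a ha => ⟨π ⁻¹' {π a}, isOpen_discrete _ |>.preimage hπ, ?_⟩⟩
  · rw [← isOpen_compl_iff, isOpen_iff_mem_nhds]
    intro v hv
    filter_upwards [(isOpen_discrete {π v}).preimage hπ |>.mem_nhds rfl,
      (hfiber (π v)).isClosed.isOpen_compl.mem_nhds fun h => hv h.1] with w hw hw' hwA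
    exact hw' ⟨hwA, hw⟩
  · rw [inter_comm]
    exact (hfiber (π a)).eq_singleton_of_mem ⟨ha, rfl⟩

section LetterSpace

variable {X : Type*}

def invLetter : X ⊕ X ⊕ Unit → Option X :=
  Sum.elim (fun _ => none) (Sum.elim some fun _ => none)

def xxinvWord (n : ℕ) (x : X) : Fin n → X ⊕ X ⊕ Unit := fun j =>
  if (j : ℕ) = 0 ∨ (j : ℕ) = 1 then Sum.inl x
  else if (j : ℕ) = 2 then Sum.inr (Sum.inl x) else Sum.inr (Sum.inr ())

theorem invLetter_xxinvWord {n : ℕ} (hn : 3 ≤ n) (x : X) :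
    invLetter (xxinvWord n x ⟨2, hn⟩) = some x := by
  simp [xxinvWord, invLetter]

theorem iMap_xxinvWord {n : ℕ} (hn : 3 ≤ n) (x : X) :
    iMap n (xxinvWord n x) = FreeGroup.of x := by
  obtain ⟨m, rfl⟩ : ∃ m, n = m + 3 := ⟨n - 3, by omega⟩
  simp [iMap, xxinvWord, List.ofFn_succ, letterVal]

theorem discreteTopology_letterTop_inr :
    @DiscreteTopology (X ⊕ Unit) (@instTopologicalSpaceSum X Unit ⊥ ⊥) :=
  @Sum.discreteTopology _ _ ⊥ ⊥ (discreteTopology_bot X) (discreteTopology_bot Unit)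

variable [t : TopologicalSpace X]

theorem t1Space_letterTop [T1Space X] : @T1Space _ (letterTop X t) :=
  letI : TopologicalSpace (X ⊕ Unit) := @instTopologicalSpaceSum X Unit ⊥ ⊥
  haveI : DiscreteTopology (X ⊕ Unit) := discreteTopology_letterTop_inr
  Sum.t1Space

theorem continuous_invLetter : @Continuous _ _ (letterTop X t) ⊥ invLetter :=
  letI : TopologicalSpace (X ⊕ Unit) := @instTopologicalSpaceSum X Unit ⊥ ⊥
  haveI : DiscreteTopology (X ⊕ Unit) := discreteTopology_letterTop_inr
  letI : TopologicalSpace (Option X) := ⊥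
  haveI : DiscreteTopology (Option X) := ⟨rfl⟩
  continuous_sum_dom.2 ⟨continuous_const, continuous_of_discreteTopology⟩

end LetterSpace

/-- For a T1 space `X` with a non-isolated point `x₀` and `n ≥ 3`, the set
`A = {(x, x, x⁻¹, e, …, e) : x ∈ X \ {x₀}}` is a closed discrete subset of
`(X ⊕ X⁻¹_d ⊕ {e})ⁿ`, yet `i_n(A) = X \ {x₀}`, whose closure in `X` contains `x₀`,
so it is not closed. -/
theorem closed_discrete_but_image_not_closed {X : Type*} [t : TopologicalSpace X] [T1Space X]
    {n : ℕ} (hn : 3 ≤ n) (x₀ : X) (hx₀ : x₀ ∈ closure {x : X | x ≠ x₀}) :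
    let tP : TopologicalSpace (Fin n → X ⊕ X ⊕ Unit) :=
      @Pi.topologicalSpace (Fin n) (fun _ => X ⊕ X ⊕ Unit) (fun _ => letterTop X t)
    let A : Set (Fin n → X ⊕ X ⊕ Unit) :=
      {v | ∃ x : X, x ≠ x₀ ∧ v = fun j : Fin n =>
        if (j : ℕ) = 0 ∨ (j : ℕ) = 1 then Sum.inl x
        else if (j : ℕ) = 2 then Sum.inr (Sum.inl x) else Sum.inr (Sum.inr ())}
    @IsClosed _ tP A ∧
      (∀ a ∈ A, ∃ U : Set (Fin n → X ⊕ X ⊕ Unit), @IsOpen _ tP U ∧ U ∩ A = {a}) ∧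
      iMap n '' A = FreeGroup.of '' {x : X | x ≠ x₀} ∧
      ¬ IsClosed {x : X | x ≠ x₀} := by
  intro tP A
  let := letterTop X t
  have := t1Space_letterTop (X := X)
  let : TopologicalSpace (Option X) := ⊥
  have : DiscreteTopology (Option X) := ⟨rfl⟩
  have hA : A = xxinvWord n '' {x | x ≠ x₀} := by
    ext v
    exact ⟨fun ⟨x, hx, h⟩ => ⟨x, hx, h.symm⟩, fun ⟨x, hx, h⟩ => ⟨x, hx, h.symm⟩⟩
  have hinj : InjOn (fun v : Fin n → X ⊕ X ⊕ Unit => invLetter (v ⟨2, hn⟩)) A := by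
    rw [hA]
    rintro _ ⟨x, -, rfl⟩ _ ⟨y, -, rfl⟩ h
    simp only [invLetter_xxinvWord, Option.some.injEq] at h
    rw [h]
  obtain ⟨hclosed, hisolated⟩ :=
    isClosed_and_isolated_of_injOn (continuous_invLetter.comp (continuous_apply _)) hinj
  refine ⟨hclosed, hisolated, ?_, fun h => ?_⟩
  · rw [hA, image_image]
    exact image_congr fun x _ => iMap_xxinvWord hn x
  · rw [h.closure_eq] at hx₀
    exact hx₀ rfl
end
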